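/- A context-free language L ⊆ D_α (Dyck primes starting with α), generated by a reduced context-free grammar G, has bounded width (i.e., there exists N such that every factor of L that is a product of Dyck primes is a product of at most N Dyck primes) if and only if L has all surfaces S_a(L) finite. -/
import Mathlib


variable {α : Type}

/-- Dyck words over `A ∪ Ā`: a letter is a pair `(a, true)` (opening tag `a`)
or `(a, false)` (closing tag `ā`). `IsDyck w` means `w` is well-balanced. -/
inductive IsDyck : List (α × Bool) → Prop
  | nil : IsDyck []
  | cons (a : α) {u v : List (α × Bool)} : IsDyck u → IsDyck v →
      IsDyck ((a, true) :: u ++ (a, false) :: v)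

/-- `IsDyckPrime a w`: `w` is a Dyck prime starting with the letter `a`,
i.e. `w = a u ā` with `u` well-balanced. Membership in `D_a`. -/
def IsDyckPrime (a : α) (w : List (α × Bool)) : Prop :=
  ∃ u, IsDyck u ∧ w = (a, true) :: u ++ [(a, false)]

/-- Membership in the set `D` of all Dyck primes. -/
def IsPrime (w : List (α × Bool)) : Prop := ∃ a, IsDyckPrime a w

/-- `F_a(L) = D_a ∩ F(L)`: factors of words of `L` that are Dyck primes starting with `a`. -/
def Fa (L : Set (List (α × Bool))) (a : α) : Set (List (α × Bool)) :=
  {w | IsDyckPrime a w ∧ ∃ v ∈ L, w <:+: v}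

/-- The surface `S_a(L)`: traces `a₁ ⋯ aₙ` of words `a u₁ ⋯ uₙ ā ∈ F_a(L)` with `uᵢ ∈ D_{aᵢ}`. -/
def Surface (L : Set (List (α × Bool))) (a : α) : Set (List α) :=
  {m | ∃ us : List (List (α × Bool)), List.Forall₂ IsDyckPrime m us ∧
      (a, true) :: us.flatten ++ [(a, false)] ∈ Fa L a}

/-! ### Auxiliary machinery: balance function -/

/-- The balance (height difference) of a word. -/
def bal (w : List (α × Bool)) : ℤ := (w.map fun p => if p.2 then (1 : ℤ) else -1).sum

lemma bal_nil : bal ([] : List (α × Bool)) = 0 := rfl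

lemma bal_append (u v : List (α × Bool)) : bal (u ++ v) = bal u + bal v := by
  simp [bal]

lemma bal_cons (p : α × Bool) (w : List (α × Bool)) :
    bal (p :: w) = (if p.2 then (1 : ℤ) else -1) + bal w := by
  simp [bal]

lemma IsDyck.bal_eq_zero {w : List (α × Bool)} (h : IsDyck w) : bal w = 0 := by
  induction h with
  | nil => rfl
  | cons a hu hv ihu ihv =>
    simp [bal_cons, bal_append, bal_nil, ihu, ihv]

lemma IsPrime.ne_nil {w : List (α × Bool)} (h : IsPrime w) : w ≠ [] := by
  obtain ⟨a, u, _, rfl⟩ := h; simp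

lemma IsPrime.bal_eq_zero {w : List (α × Bool)} (h : IsPrime w) : bal w = 0 := by
  obtain ⟨a, u, hu, rfl⟩ := h
  simp [bal_cons, bal_append, bal_nil, hu.bal_eq_zero]

lemma bal_flatten_primes {us : List (List (α × Bool))} (h : ∀ u ∈ us, IsPrime u) :
    bal us.flatten = 0 := by
  induction us with
  | nil => rfl
  | cons u us ih =>
    simp only [List.flatten_cons, bal_append]
    rw [(h u (by simp)).bal_eq_zero, ih (fun x hx => h x (by simp [hx]))]
    ring

lemma flatten_primes_ne_nil {us : List (List (α × Bool))} (h : ∀ u ∈ us, IsPrime u)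
    (hne : us ≠ []) : us.flatten ≠ [] := by
  intro hf
  rw [List.flatten_eq_nil_iff] at hf
  cases us with
  | nil => exact hne rfl
  | cons u us => exact (h u (by simp)).ne_nil (hf u (by simp))

/-- Every prefix of a Dyck word has nonnegative balance. -/
lemma IsDyck.bal_prefix_nonneg {w : List (α × Bool)} (h : IsDyck w) :
    ∀ x y : List (α × Bool), w = x ++ y → 0 ≤ bal x := by
  induction h with
  | nil =>
    intro x y hxy
    have hx : x = [] := (List.append_eq_nil_iff.mp hxy.symm).1
    simp [hx, bal_nil]
  | @cons a u v hu hv ihu ihv =>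
    intro x y hxy
    cases x with
    | nil => simp [bal_nil]
    | cons hd x' =>
      rw [List.cons_append] at hxy
      injection hxy with h1 h2
      subst h1
      rcases List.append_eq_append_iff.mp h2 with ⟨m, hm1, hm2⟩ | ⟨m, hm1, hm2⟩
      · -- x' = u ++ m, (a,false)::v = m ++ y
        cases m with
        | nil =>
          simp only [List.append_nil] at hm1
          subst hm1
          simp [bal_cons, hu.bal_eq_zero]
        | cons m0 m' =>
          rw [List.cons_append] at hm2
          injection hm2 with h3 h4
          subst hm1
          have h5 : 0 ≤ bal m' := ihv m' y h4
          simp [bal_cons, bal_append, hu.bal_eq_zero, ← h3]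
          omega
      · -- u = x' ++ m
        have h5 : 0 ≤ bal x' := ihu x' m hm1
        simp [bal_cons]
        omega

/-- A nonempty proper prefix of a Dyck prime has balance at least 1. -/
lemma prime_prefix_bal {p x y : List (α × Bool)} (hp : IsPrime p) (hxy : p = x ++ y)
    (hx : x ≠ []) (hy : y ≠ []) : 1 ≤ bal x := by
  obtain ⟨a, u, hu, rfl⟩ := hp
  cases x with
  | nil => exact absurd rfl hx
  | cons hd x' =>
    rw [List.cons_append] at hxy
    injection hxy with h1 h2
    subst h1
    rcases List.append_eq_append_iff.mp h2 with ⟨m, hm1, hm2⟩ | ⟨m, hm1, hm2⟩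
    · -- x' = u ++ m, [(a,false)] = m ++ y
      cases m with
      | nil =>
        simp only [List.append_nil] at hm1
        subst hm1
        simp [bal_cons, bal_append, hu.bal_eq_zero]
      | cons m0 m' =>
        exfalso
        apply hy
        have hlen := congrArg List.length hm2
        simp only [List.length_append, List.length_cons, List.length_nil] at hlen
        exact List.eq_nil_of_length_eq_zero (by omega)
    · -- u = x' ++ m
      have h5 : 0 ≤ bal x' := hu.bal_prefix_nonneg x' m hm1
      simp [bal_cons]
      omega

lemma IsDyck.append {u v : List (α × Bool)} (hu : IsDyck u) (hv : IsDyck v) :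
    IsDyck (u ++ v) := by
  induction hu generalizing v with
  | nil => simpa
  | @cons a u₁ u₂ hu₁ hu₂ ih₁ ih₂ =>
    have h := IsDyck.cons a hu₁ (ih₂ hv)
    simpa using h

lemma IsPrime.isDyck {w : List (α × Bool)} (h : IsPrime w) : IsDyck w := by
  obtain ⟨a, u, hu, rfl⟩ := h
  exact IsDyck.cons a hu IsDyck.nil

lemma isDyck_flatten_primes {us : List (List (α × Bool))} (h : ∀ u ∈ us, IsPrime u) :
    IsDyck us.flatten := by
  induction us with
  | nil => exact IsDyck.nil
  | cons u us ih =>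
    simp only [List.flatten_cons]
    exact (h u (by simp)).isDyck.append (ih fun x hx => h x (by simp [hx]))

/-- A Dyck word factors into primes. -/
lemma IsDyck.exists_primes {v : List (α × Bool)} (hv : IsDyck v) :
    ∃ ps : List (List (α × Bool)), (∀ p ∈ ps, IsPrime p) ∧ ps.flatten = v := by
  induction hv with
  | nil => exact ⟨[], by simp, rfl⟩
  | @cons a u v' hu hv' ihu ihv' =>
    obtain ⟨ps, hps, hfl⟩ := ihv'
    refine ⟨((a, true) :: u ++ [(a, false)]) :: ps, ?_, ?_⟩
    · rintro q hq
      rcases List.mem_cons.mp hq with rfl | hq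
      · exact ⟨a, u, hu, rfl⟩
      · exact hps q hq
    · simp [hfl]

/-- Two primes starting at the same position coincide. -/
lemma prime_eq_of_aligned {u p r r' : List (α × Bool)} (hu : IsPrime u) (hp : IsPrime p)
    (h : u ++ r = p ++ r') : u = p := by
  rcases List.append_eq_append_iff.mp h with ⟨m, hm1, hm2⟩ | ⟨m, hm1, hm2⟩
  · -- p = u ++ m
    cases m with
    | nil => simpa using hm1.symm
    | cons m0 m' =>
      exfalso
      have h1 : 1 ≤ bal u := prime_prefix_bal hp hm1 hu.ne_nil (by simp)
      rw [hu.bal_eq_zero] at h1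
      omega
  · -- u = p ++ m
    cases m with
    | nil => simpa using hm1
    | cons m0 m' =>
      exfalso
      have h1 : 1 ≤ bal p := prime_prefix_bal hu hm1 hp.ne_nil (by simp)
      rw [hp.bal_eq_zero] at h1
      omega

/-- Stripping a prime prefix of a Dyck word leaves a Dyck word. -/
lemma IsDyck.drop_prime {v u r : List (α × Bool)} (hv : IsDyck v) (hu : IsPrime u)
    (h : v = u ++ r) : IsDyck r := by
  cases hv with
  | nil =>
    exact absurd (List.append_eq_nil_iff.mp h.symm).1 hu.ne_nil
  | @cons a u₁ v₁ hu₁ hv₁ =>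
    have hsplit : u ++ r = ((a, true) :: u₁ ++ [(a, false)]) ++ v₁ := by
      rw [← h]; simp
    have hp : IsPrime ((a, true) :: u₁ ++ [(a, false)]) := ⟨a, u₁, hu₁, rfl⟩
    have heq : u = (a, true) :: u₁ ++ [(a, false)] := prime_eq_of_aligned hu hp hsplit
    rw [heq] at hsplit
    have hr : r = v₁ := List.append_cancel_left hsplit
    exact hr ▸ hv₁

/-- If a Dyck word starts with a product of primes, the rest is a product of primes. -/
lemma lemE {us : List (List (α × Bool))} : ∀ {v t : List (α × Bool)}, IsDyck v →
    (∀ u ∈ us, IsPrime u) → v = us.flatten ++ t →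
    ∃ ws : List (List (α × Bool)), (∀ w ∈ ws, IsPrime w) ∧ t = ws.flatten := by
  induction us with
  | nil =>
    intro v t hv _ h
    simp only [List.flatten_nil, List.nil_append] at h
    subst h
    obtain ⟨ps, hps, hfl⟩ := hv.exists_primes
    exact ⟨ps, hps, hfl.symm⟩
  | cons u us ih =>
    intro v t hv hus h
    simp only [List.flatten_cons, List.append_assoc] at h
    have hr : IsDyck (us.flatten ++ t) := hv.drop_prime (hus u (by simp)) h
    exact ih hr (fun x hx => hus x (by simp [hx])) rfl

/-- Splitting a flatten at an arbitrary position. -/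
lemma flatten_split {β : Type} (us : List (List β)) : ∀ m k : List β, us.flatten = m ++ k →
    (∃ us₁ us₂, us = us₁ ++ us₂ ∧ us₁.flatten = m ∧ us₂.flatten = k) ∨
    (∃ us₁ us₂ y z, us = us₁ ++ (y ++ z) :: us₂ ∧ y ≠ ([] : List β) ∧ z ≠ [] ∧
      m = us₁.flatten ++ y ∧ k = z ++ us₂.flatten) := by
  induction us with
  | nil =>
    intro m k h
    simp only [List.flatten_nil] at h
    obtain ⟨hm, hk⟩ := List.append_eq_nil_iff.mp h.symm
    exact Or.inl ⟨[], [], rfl, by simp [hm], by simp [hk]⟩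
  | cons u us ih =>
    intro m k h
    simp only [List.flatten_cons] at h
    rcases List.append_eq_append_iff.mp h with ⟨m', hm1, hm2⟩ | ⟨k', hk1, hk2⟩
    · -- m = u ++ m', flatten us = m' ++ k
      rcases ih m' k hm2 with ⟨a₁, a₂, ha, hfa₁, hfa₂⟩ | ⟨a₁, a₂, y, z, ha, hy, hz, hm', hk⟩
      · exact Or.inl ⟨u :: a₁, a₂, by rw [ha, List.cons_append], by simp [hfa₁, hm1], hfa₂⟩
      · exact Or.inr ⟨u :: a₁, a₂, y, z, by rw [ha, List.cons_append], hy, hz,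
          by simp [hm1, hm', List.append_assoc], hk⟩
    · -- u = m ++ k', k = k' ++ flatten us
      cases m with
      | nil =>
        refine Or.inl ⟨[], u :: us, rfl, rfl, ?_⟩
        simp only [List.nil_append] at hk1
        simp [hk2, hk1]
      | cons m0 m' =>
        cases k' with
        | nil =>
          simp only [List.append_nil] at hk1
          exact Or.inl ⟨[u], us, rfl, by simp [hk1], by simp [hk2]⟩
        | cons k0 k'' =>
          exact Or.inr ⟨[], us, m0 :: m', k0 :: k'', by simp [hk1], by simp, by simp,
            by simp, by simpa using hk2⟩

/-- The main structural lemma: a block of primes occurring inside a Dyck word either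
spans full top-level primes (with balanced context), or lies strictly inside an
enclosing prime whose children extend the block. -/
lemma lemD : ∀ (n : ℕ) (v : List (α × Bool)), v.length ≤ n → IsDyck v →
    ∀ (s : List (α × Bool)) (us : List (List (α × Bool))) (t : List (α × Bool)),
      (∀ u ∈ us, IsPrime u) → us ≠ [] → v = s ++ us.flatten ++ t →
    (∃ ws₁ ws₂ : List (List (α × Bool)), (∀ w ∈ ws₁, IsPrime w) ∧ (∀ w ∈ ws₂, IsPrime w) ∧
        s = ws₁.flatten ∧ t = ws₂.flatten) ∨
    (∃ (b : α) (ws : List (List (α × Bool))), us <:+: ws ∧ (∀ w ∈ ws, IsPrime w) ∧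
        ((b, true) :: ws.flatten ++ [(b, false)]) <:+: v) := by
  intro n
  induction n with
  | zero =>
    intro v hlen hv s us t hus hne hsplit
    exfalso
    have hv0 : v = [] := List.eq_nil_of_length_eq_zero (Nat.le_zero.mp hlen)
    subst hv0
    have h0 := List.append_eq_nil_iff.mp hsplit.symm
    exact flatten_primes_ne_nil hus hne (List.append_eq_nil_iff.mp h0.1).2
  | succ n ihn =>
    intro v hlen hv s us t hus hne hsplit
    cases hv with
    | nil =>
      exfalso
      have h0 := List.append_eq_nil_iff.mp hsplit.symm
      exact flatten_primes_ne_nil hus hne (List.append_eq_nil_iff.mp h0.1).2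
    | @cons a u v' hu hv' =>
      set p : List (α × Bool) := (a, true) :: u ++ [(a, false)] with hp_def
      have hp : IsPrime p := ⟨a, u, hu, rfl⟩
      have hv_eq : s ++ (us.flatten ++ t) = p ++ v' := by
        rw [← List.append_assoc, ← hsplit, hp_def]
        simp
      have hlen' : u.length + v'.length + 2 ≤ n + 1 := by
        have h2 := hlen
        simp only [List.length_cons, List.length_append] at h2
        omega
      have hlen_v' : v'.length ≤ n := by omega
      have hlen_u : u.length ≤ n := by omega
      have hp_infix_v : p <:+: ((a, true) :: u ++ (a, false) :: v') := by
        refine ⟨[], v', ?_⟩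
        simp [hp_def]
      have hv'_infix_v : v' <:+: ((a, true) :: u ++ (a, false) :: v') := by
        refine ⟨p, [], ?_⟩
        simp [hp_def]
      rcases List.append_eq_append_iff.mp hv_eq with ⟨m, hm1, hm2⟩ | ⟨m, hm1, hm2⟩
      · -- p = s ++ m, us.flatten ++ t = m ++ v'
        rcases List.append_eq_append_iff.mp hm2 with ⟨k, hk1, hk2⟩ | ⟨k, hk1, hk2⟩
        · -- Case B: m = us.flatten ++ k, t = k ++ v'; block inside p
          have hpB : p = s ++ us.flatten ++ k := by rw [hm1, hk1, List.append_assoc]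
          by_cases hs : s = []
          · -- block is a prefix of p, so it is all of p
            subst hs
            simp only [List.nil_append] at hpB
            have hk_nil : k = [] := by
              by_contra hk
              have h1 : 1 ≤ bal us.flatten :=
                prime_prefix_bal hp hpB (flatten_primes_ne_nil hus hne) hk
              rw [bal_flatten_primes hus] at h1
              omega
            subst hk_nil
            simp only [List.append_nil] at hpB
            simp only [List.nil_append] at hk2
            obtain ⟨ws, hws, hws_fl⟩ := hv'.exists_primes
            exact Or.inl ⟨[], ws, by simp, hws, rfl, by rw [hk2, hws_fl]⟩
          · -- s ≠ [], so k ≠ [] and block inside interior u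
            have hk_ne : k ≠ [] := by
              intro hk
              subst hk
              simp only [List.append_nil] at hpB
              have h1 : 1 ≤ bal s :=
                prime_prefix_bal hp hpB hs (flatten_primes_ne_nil hus hne)
              have h2 : bal p = 0 := hp.bal_eq_zero
              rw [hpB, bal_append, bal_flatten_primes hus] at h2
              omega
            obtain ⟨s0, s₁, rfl⟩ : ∃ s0 s₁, s = s0 :: s₁ := by
              cases s with
              | nil => exact absurd rfl hs
              | cons s0 s₁ => exact ⟨s0, s₁, rfl⟩
            rcases List.eq_nil_or_concat k with hk | ⟨k₁, kl, rfl⟩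
            · exact absurd hk hk_ne
            have hpB2 : (a, true) :: (u ++ [(a, false)]) =
                s0 :: (s₁ ++ (us.flatten ++ (k₁ ++ [kl]))) := by
              have hthis := hpB
              rw [hp_def] at hthis
              simpa [List.concat_eq_append, List.append_assoc] using hthis
            injection hpB2 with hs0 hint
            have hint2 : u ++ [(a, false)] = (s₁ ++ us.flatten ++ k₁) ++ [kl] := by
              rw [hint]; simp [List.append_assoc]
            obtain ⟨hu_eq, _⟩ := List.append_inj' hint2 (by simp)
            rcases ihn u hlen_u hu s₁ us k₁ hus hne hu_eq with
              ⟨ws₁, ws₂, hws₁, hws₂, hs₁, hk₁⟩ | ⟨b, ws, hinf, hws, hinf2⟩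
            · -- enclosing prime is p itself
              refine Or.inr ⟨a, ws₁ ++ us ++ ws₂,
                ⟨ws₁, ws₂, by rw [List.append_assoc]⟩, ?_, ?_⟩
              · intro w hw
                simp only [List.mem_append] at hw
                rcases hw with (hw | hw) | hw
                · exact hws₁ w hw
                · exact hus w hw
                · exact hws₂ w hw
              · have hfl : (ws₁ ++ us ++ ws₂).flatten = u := by
                  rw [hu_eq, hs₁, hk₁]
                  simp [List.flatten_append, List.append_assoc]
                rw [hfl]
                exact hp_infix_v
            · -- deeper enclosing prime, inside u hence inside v
              refine Or.inr ⟨b, ws, hinf, hws, ?_⟩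
              have hu_inf_p : u <:+: p := ⟨[(a, true)], [(a, false)], by simp [hp_def]⟩
              exact hinf2.trans (hu_inf_p.trans hp_infix_v)
        · -- us.flatten = m ++ k, v' = k ++ t
          by_cases hm : m = []
          · -- s = p, block starts exactly at v'
            subst hm
            simp only [List.append_nil] at hm1
            simp only [List.nil_append] at hk1
            rcases ihn v' hlen_v' hv' [] us t hus hne (by simp [hk2, hk1]) with
              ⟨ws₁, ws₂, hws₁, hws₂, hs₁, ht₂⟩ | ⟨b, ws, hinf, hws, hinf2⟩
            · refine Or.inl ⟨p :: ws₁, ws₂, ?_, hws₂, ?_, ht₂⟩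
              · intro w hw
                rcases List.mem_cons.mp hw with rfl | hw
                · exact hp
                · exact hws₁ w hw
              · simp [← hm1, ← hs₁]
            · exact Or.inr ⟨b, ws, hinf, hws, hinf2.trans hv'_infix_v⟩
          · -- m ≠ []: the block crosses the boundary p/v'
            rcases flatten_split us m k hk1 with
              ⟨us₁, us₂, hu12, hfl₁, hfl₂⟩ | ⟨us₁, us₂, y, z, hu12, hy, hz, hm', hk'⟩
            · -- block splits as us₁ (covering a suffix of p) ++ us₂ (a prefix of v')
              have hus₁ : ∀ w ∈ us₁, IsPrime w := fun w hw => hus w (by simp [hu12, hw])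
              have hus₂ : ∀ w ∈ us₂, IsPrime w := fun w hw => hus w (by simp [hu12, hw])
              have hus₁_ne : us₁ ≠ [] := by
                rintro rfl
                exact hm (by simpa using hfl₁.symm)
              have hs : s = [] := by
                by_contra hs
                have h1 : 1 ≤ bal s := prime_prefix_bal hp hm1 hs (hfl₁ ▸
                  flatten_primes_ne_nil hus₁ hus₁_ne)
                have h2 : bal p = 0 := hp.bal_eq_zero
                rw [hm1, bal_append, ← hfl₁, bal_flatten_primes hus₁] at h2
                omega
              subst hs
              have hv'_eq : v' = us₂.flatten ++ t := by rw [hk2, hfl₂]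
              obtain ⟨ws, hws, hws_fl⟩ := lemE hv' hus₂ hv'_eq
              exact Or.inl ⟨[], ws, by simp, hws, rfl, hws_fl⟩
            · -- a prime y++z straddles the boundary: impossible
              exfalso
              have hyz : IsPrime (y ++ z) := hus (y ++ z) (by simp [hu12])
              have h1 : 1 ≤ bal y := prime_prefix_bal hyz rfl hy hz
              have hus₁ : ∀ w ∈ us₁, IsPrime w := fun w hw => hus w (by simp [hu12, hw])
              have hp_eq : p = (s ++ us₁.flatten) ++ y := by
                rw [hm1, hm', List.append_assoc]
              have hbal₁ : bal us₁.flatten = 0 := bal_flatten_primes hus₁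
              by_cases hpre : s ++ us₁.flatten = []
              · rw [hpre, List.nil_append] at hp_eq
                have h0 : bal y = 0 := hp_eq ▸ hp.bal_eq_zero
                omega
              · have h2 : 1 ≤ bal (s ++ us₁.flatten) :=
                  prime_prefix_bal hp hp_eq hpre hy
                have h3 : bal p = 0 := hp.bal_eq_zero
                rw [hp_eq, bal_append, bal_append, hbal₁] at h3
                rw [bal_append, hbal₁] at h2
                omega
      · -- Case A: s = p ++ m, v' = m ++ us.flatten ++ t
        rcases ihn v' hlen_v' hv' m us t hus hne (by rw [hm2, List.append_assoc]) with
          ⟨ws₁, ws₂, hws₁, hws₂, hs₁, ht₂⟩ | ⟨b, ws, hinf, hws, hinf2⟩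
        · refine Or.inl ⟨p :: ws₁, ws₂, ?_, hws₂, ?_, ht₂⟩
          · intro w hw
            rcases List.mem_cons.mp hw with rfl | hw
            · exact hp
            · exact hws₁ w hw
          · simp [hm1, ← hs₁]
        · exact Or.inr ⟨b, ws, hinf, hws, hinf2.trans hv'_infix_v⟩

lemma forall₂_of_primes {ws : List (List (α × Bool))} (h : ∀ w ∈ ws, IsPrime w) :
    ∃ m : List α, List.Forall₂ IsDyckPrime m ws := by
  induction ws with
  | nil => exact ⟨[], List.Forall₂.nil⟩
  | cons w ws ih =>
    obtain ⟨b, hb⟩ := h w (by simp)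
    obtain ⟨m, hm⟩ := ih fun x hx => h x (by simp [hx])
    exact ⟨b :: m, List.Forall₂.cons hb hm⟩

lemma primes_of_forall₂ {m : List α} {ws : List (List (α × Bool))}
    (h : List.Forall₂ IsDyckPrime m ws) : ∀ w ∈ ws, IsPrime w := by
  induction h with
  | nil => simp
  | cons hb _ ih =>
    intro w hw
    rcases List.mem_cons.mp hw with rfl | hw
    · exact ⟨_, hb⟩
    · exact ih w hw

/-- A list of primes flattening to a single prime is a singleton. -/
lemma length_le_one_of_flatten_prime {ls : List (List (α × Bool))}
    (hls : ∀ l ∈ ls, IsPrime l) {p : List (α × Bool)} (hp : IsPrime p)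
    (hfl : ls.flatten = p) : ls.length ≤ 1 := by
  cases ls with
  | nil => simp
  | cons l ls' =>
    simp only [List.flatten_cons] at hfl
    have hl : IsPrime l := hls l (by simp)
    have hls' : ∀ x ∈ ls', IsPrime x := fun x hx => hls x (by simp [hx])
    have h2 : ls'.flatten = [] := by
      by_contra h
      have h1 : 1 ≤ bal l := prime_prefix_bal hp hfl.symm hl.ne_nil h
      rw [hl.bal_eq_zero] at h1
      omega
    have h3 : ls' = [] := by
      cases ls' with
      | nil => rfl
      | cons x xs => exact absurd h2 (flatten_primes_ne_nil hls' (by simp))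
    simp [h3]

/-- Lemma 6.4 (with the observation of Section 6): a context-free language
`L ⊆ D_α`, generated by a reduced context-free grammar, has bounded width
(some `N` bounds the number of Dyck primes in any factor of `L` that is a
product of Dyck primes) iff all its surfaces are finite. -/
theorem bounded_width_iff_finite_surfaces [Fintype α]
    (G : ContextFreeGrammar (α × Bool)) (a₀ : α)
    (hprod : ∀ Y : G.NT, ∃ w : List (α × Bool),
        G.Derives [Symbol.nonterminal Y] (w.map Symbol.terminal))
    (hacc : ∀ Y : G.NT, ∃ pre post : List (Symbol (α × Bool) G.NT),
        G.Derives [Symbol.nonterminal G.initial] (pre ++ [Symbol.nonterminal Y] ++ post))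
    (L : Set (List (α × Bool))) (hLG : L = {w | w ∈ G.language})
    (hL : L ⊆ {w | IsDyckPrime a₀ w}) :
    (∃ N : ℕ, ∀ w : List (α × Bool), (∃ v ∈ L, w <:+: v) →
        ∀ us : List (List (α × Bool)), (∀ u ∈ us, IsPrime u) → us.flatten = w →
          us.length ≤ N) ↔
      ∀ a : α, (Surface L a).Finite := by
  constructor
  · rintro ⟨N, hN⟩ a
    apply Set.Finite.subset (List.finite_length_le α N)
    rintro m ⟨us, hf₂, hprime, v, hvL, hinf⟩
    have hflinf : us.flatten <:+: ((a, true) :: us.flatten ++ [(a, false)]) :=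
      ⟨[(a, true)], [(a, false)], by simp⟩
    have hle : us.length ≤ N :=
      hN us.flatten ⟨v, hvL, hflinf.trans hinf⟩ us (primes_of_forall₂ hf₂) rfl
    simpa [Set.mem_setOf_eq, hf₂.length_eq] using hle
  · intro hfin
    have hS : (⋃ a : α, Surface L a).Finite := Set.finite_iUnion hfin
    obtain ⟨M, hM⟩ := (hS.image List.length).bddAbove
    refine ⟨M + 1, ?_⟩
    rintro w ⟨v, hvL, hinf⟩ us hus hflat
    rcases eq_or_ne us [] with rfl | hne
    · simp
    obtain ⟨s, t, hst⟩ := hinf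
    have hv : IsDyckPrime a₀ v := hL hvL
    have hvDyck : IsDyck v := IsPrime.isDyck ⟨a₀, hv⟩
    have hsplit : v = s ++ us.flatten ++ t := by rw [hflat, hst]
    rcases lemD v.length v le_rfl hvDyck s us t hus hne hsplit with
      ⟨ws₁, ws₂, hws₁, hws₂, hs₁, ht₂⟩ | ⟨b, ws, hinf', hws, hinf2⟩
    · have hall : ∀ l ∈ ws₁ ++ us ++ ws₂, IsPrime l := by
        intro l hl
        simp only [List.mem_append] at hl
        rcases hl with (hl | hl) | hl
        · exact hws₁ l hl
        · exact hus l hl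
        · exact hws₂ l hl
      have hfl : (ws₁ ++ us ++ ws₂).flatten = v := by
        rw [hsplit, hs₁, ht₂]
        simp [List.flatten_append]
      have h1 : (ws₁ ++ us ++ ws₂).length ≤ 1 :=
        length_le_one_of_flatten_prime hall ⟨a₀, hv⟩ hfl
      simp only [List.length_append] at h1
      omega
    · have hWprime : IsDyckPrime b ((b, true) :: ws.flatten ++ [(b, false)]) :=
        ⟨ws.flatten, isDyck_flatten_primes hws, rfl⟩
      obtain ⟨m, hm⟩ := forall₂_of_primes hws
      have hmS : m ∈ Surface L b := ⟨ws, hm, hWprime, v, hvL, hinf2⟩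
      have hlen : m.length ≤ M := hM ⟨m, Set.mem_iUnion.mpr ⟨b, hmS⟩, rfl⟩
      have h2 : us.length ≤ ws.length := hinf'.length_le
      rw [hm.length_eq] at hlen
      omega
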